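/- Let u ∈ L²(T) with Fourier coefficient u_k for a single mode u(x) = e^{2πikx}, let z ≠ 0, ε > 0, and κ_ε^z the triangular kernel as above with Fourier coefficient κ̂_ε^z(k) = -(2/(ω²z²))(e^{iωz} - 1 - iωz), ω = 2πkε. Then ∫_R e^{-z²} z⁴ |1 - κ̂_ε^z(k)|² dz = (4√π/ω⁴)[2 - 2e^{-ω²/4} + (3/16)ω⁴ - (1/2)ω² e^{-ω²/4} - (1/4)ω⁴ e^{-ω²/4}], and this is at most (5/6)√π (1 - e^{-ω²/4}). -/

import Mathlib

/-!
For `z ≠ 0`, `z⁴ |1 - κ̂|² = (4/ω⁴)(2 - 2 cos ωz + ω⁴z⁴/4 - 2ωz sin ωz + ω²z² cos ωz)`, the real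
part of a combination of `xⁿ e^{iωx}` with `n ≤ 4`. Against the Gaussian weight these give the
moments `Mₙ(ω) = ∫ xⁿ e^{iωx} e^{-x²} dx`, which are determined by `M₀(ω) = √π e^{-ω²/4}` (the
Fourier transform of the Gaussian) and the recursion `2 Mₙ₊₁ = n Mₙ₋₁ + iω Mₙ`, obtained by
integrating by parts against `(e^{-x²})' = -2x e^{-x²}`.

With `s = ω²/4` the bound becomes `2(1 - e^{-s}) ≤ s²/3 + 2s e^{-s} + (2/3) s² e^{-s}`, an
equality at `s = 0`; the difference of the two sides has derivative
`(2/3) s (1 - (1 + s) e^{-s}) ≥ 0` since `1 + s ≤ eˢ`.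
-/

open Real MeasureTheory
open Complex hiding cos sin

noncomputable def gaussFourierMoment (n : ℕ) (ω : ℝ) : ℂ :=
  ∫ x : ℝ, (x : ℂ) ^ n * cexp (I * ω * x) * rexp (-x ^ 2)

lemma integrable_pow_mul_exp_neg_sq (n : ℕ) :
    Integrable fun x : ℝ => x ^ n * rexp (-x ^ 2) := by
  simpa using integrable_rpow_mul_exp_neg_mul_sq one_pos (s := n)
    (by linarith [n.cast_nonneg (α := ℝ)])

lemma integrable_gaussFourierMoment (n : ℕ) (ω : ℝ) :
    Integrable fun x : ℝ => (x : ℂ) ^ n * cexp (I * ω * x) * rexp (-x ^ 2) := by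
  refine (integrable_pow_mul_exp_neg_sq n).norm.mono' (by fun_prop) (.of_forall fun x => ?_)
  simp [Complex.norm_exp, abs_exp, ← ofReal_pow]

-- At `n = 0` the truncated `n - 1` is harmless: its coefficient `n` vanishes.
lemma two_mul_gaussFourierMoment_succ (n : ℕ) (ω : ℝ) :
    2 * gaussFourierMoment (n + 1) ω
      = n * gaussFourierMoment (n - 1) ω + I * ω * gaussFourierMoment n ω := by
  have hu (x : ℝ) : HasDerivAt (fun x : ℝ => (x : ℂ) ^ n * cexp (I * ω * x))
      ((n * (x : ℂ) ^ (n - 1) + I * ω * (x : ℂ) ^ n) * cexp (I * ω * x)) x :=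
    (((hasDerivAt_pow n (x : ℂ)).comp_ofReal).fun_mul
      ((hasDerivAt_const_mul (I * ω)).cexp.comp_ofReal)).congr_deriv (by ring)
  have hv (x : ℝ) : HasDerivAt (fun x : ℝ => ((rexp (-x ^ 2) : ℝ) : ℂ))
      (-2 * x * rexp (-x ^ 2)) x :=
    (((hasDerivAt_pow 2 x).fun_neg.exp).ofReal_comp).congr_deriv (by push_cast; ring)
  have huv' := (integrable_gaussFourierMoment (n + 1) ω).const_mul (-2)
  have hprev := (integrable_gaussFourierMoment (n - 1) ω).const_mul (n : ℂ)
  have hcurr := (integrable_gaussFourierMoment n ω).const_mul (I * ω)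
  have ibp := integral_mul_deriv_eq_deriv_mul_of_integrable (fun x _ => hu x) (fun x _ => hv x)
    (huv'.congr (.of_forall fun x => by simp only [Pi.mul_apply]; ring))
    ((hprev.add hcurr).congr
      (.of_forall fun x => by simp only [Pi.mul_apply, Pi.add_apply]; ring))
    (integrable_gaussFourierMoment n ω)
  calc 2 * gaussFourierMoment (n + 1) ω
      = -∫ x : ℝ, (x : ℂ) ^ n * cexp (I * ω * x) * (-2 * x * rexp (-x ^ 2)) := by
        rw [gaussFourierMoment, ← integral_const_mul, ← integral_neg]
        congr 1 with x; ring
    _ = ∫ x : ℝ, (n * (x : ℂ) ^ (n - 1) + I * ω * (x : ℂ) ^ n) * cexp (I * ω * x)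
          * rexp (-x ^ 2) := by rw [ibp, neg_neg]
    _ = _ := by
        rw [gaussFourierMoment, gaussFourierMoment, ← integral_const_mul, ← integral_const_mul,
          ← integral_add hprev hcurr]
        congr 1 with x; ring

lemma gaussFourierMoment_zero (ω : ℝ) :
    gaussFourierMoment 0 ω = (√π * rexp (-ω ^ 2 / 4) : ℝ) := by
  have h := fourierIntegral_gaussian (b := 1) (by simp) ω
  have hsqrt : (π : ℂ) ^ (1 / 2 : ℂ) = (√π : ℝ) := by
    rw [sqrt_eq_rpow, ofReal_cpow pi_pos.le]; norm_num
  simp only [div_one, mul_one, hsqrt] at h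
  rw [gaussFourierMoment]
  push_cast
  simpa [ofReal_exp] using h

lemma gaussFourierMoment_one (ω : ℝ) :
    gaussFourierMoment 1 ω = I * ω / 2 * gaussFourierMoment 0 ω := by
  have h := two_mul_gaussFourierMoment_succ 0 ω
  norm_num at h
  linear_combination h / 2

lemma gaussFourierMoment_two (ω : ℝ) :
    gaussFourierMoment 2 ω = (1 / 2 - ω ^ 2 / 4) * gaussFourierMoment 0 ω := by
  have h := two_mul_gaussFourierMoment_succ 1 ω
  norm_num [gaussFourierMoment_one] at h
  linear_combination h / 2 + ω ^ 2 / 4 * gaussFourierMoment 0 ω * I_sq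

lemma gaussFourierMoment_four_zero : gaussFourierMoment 4 0 = (3 / 4 * √π : ℝ) := by
  have h := two_mul_gaussFourierMoment_succ 3 0
  rw [gaussFourierMoment_two, gaussFourierMoment_zero] at h
  norm_num at h
  push_cast
  linear_combination h / 2

lemma integral_exp_neg_sq_mul_cos_sin_poly (ω : ℝ) :
    ∫ z : ℝ, rexp (-z ^ 2) * (2 - 2 * cos (ω * z) + ω ^ 4 * z ^ 4 / 4
        - 2 * ω * z * sin (ω * z) + ω ^ 2 * z ^ 2 * cos (ω * z))
      = √π * (2 - 2 * rexp (-ω ^ 2 / 4) + 3 / 16 * ω ^ 4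
          - 1 / 2 * ω ^ 2 * rexp (-ω ^ 2 / 4) - 1 / 4 * ω ^ 4 * rexp (-ω ^ 2 / 4)) := by
  let m (n : ℕ) (ω : ℝ) (z : ℝ) : ℂ := (z : ℂ) ^ n * cexp (I * ω * z) * rexp (-z ^ 2)
  have hm (n : ℕ) (ω : ℝ) : Integrable (m n ω) := integrable_gaussFourierMoment n ω
  let P (z : ℝ) : ℂ :=
    2 * m 0 0 z - 2 * m 0 ω z + ω ^ 4 / 4 * m 4 0 z + 2 * ω * I * m 1 ω z + ω ^ 2 * m 2 ω z
  have hre (z : ℝ) : rexp (-z ^ 2) * (2 - 2 * cos (ω * z) + ω ^ 4 * z ^ 4 / 4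
      - 2 * ω * z * sin (ω * z) + ω ^ 2 * z ^ 2 * cos (ω * z)) = (P z).re := by
    simp only [P, m, ← ofReal_pow, ofReal_exp, ofReal_neg, pow_zero, ofReal_one, ofReal_zero,
      mul_zero, zero_mul, Complex.exp_zero, mul_one, one_mul, pow_one, add_re, sub_re, mul_re,
      re_ofNat, exp_re, neg_re, ofReal_re, neg_im, ofReal_im, neg_zero, Real.cos_zero, im_ofNat,
      exp_im, Real.sin_zero, sub_zero, I_re, I_im, sub_self, mul_im, zero_add, Real.exp_zero,
      div_ofNat_re, div_ofNat_im, zero_div, add_zero, zero_sub]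
    ring
  have hP : ∫ z, P z = 2 * gaussFourierMoment 0 0 - 2 * gaussFourierMoment 0 ω
        + ω ^ 4 / 4 * gaussFourierMoment 4 0 + 2 * ω * I * gaussFourierMoment 1 ω
        + ω ^ 2 * gaussFourierMoment 2 ω := by
    simp (disch := fun_prop) only [P, integral_add, integral_sub, integral_const_mul]
    rfl
  rw [integral_congr_ae (.of_forall hre)]
  refine (integral_re (by fun_prop : Integrable P)).trans ?_
  show (∫ z, P z).re = _
  rw [hP, gaussFourierMoment_one, gaussFourierMoment_two, gaussFourierMoment_four_zero,
    gaussFourierMoment_zero, gaussFourierMoment_zero]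
  convert ofReal_re _ using 2
  push_cast
  rw [zero_pow two_ne_zero, neg_zero, zero_div, Complex.exp_zero]
  linear_combination (ω : ℂ) ^ 2 * √π * cexp (-ω ^ 2 / 4) * I_sq

/-- The Fourier coefficient `κ̂_ε^z(k)` of the triangular kernel, as a function of
`ω = 2πkε` and `z`. -/
noncomputable def triangularKernelHat (ω z : ℝ) : ℂ :=
  -(2 / ((ω : ℂ) ^ 2 * (z : ℂ) ^ 2)) * (cexp (I * ω * z) - 1 - I * ω * z)

lemma pow_four_mul_norm_one_sub_triangularKernelHat_sq {ω z : ℝ} (hω : ω ≠ 0) (hz : z ≠ 0) :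
    z ^ 4 * ‖1 - triangularKernelHat ω z‖ ^ 2
      = 4 / ω ^ 4 * (2 - 2 * cos (ω * z) + ω ^ 4 * z ^ 4 / 4
          - 2 * ω * z * sin (ω * z) + ω ^ 2 * z ^ 2 * cos (ω * z)) := by
  have hexp : cexp (I * ω * z) = (cos (ω * z) : ℂ) + (sin (ω * z) : ℂ) * I := by
    rw [show I * ω * z = ((ω * z : ℝ) : ℂ) * I by push_cast; ring, exp_mul_I, ofReal_cos,
      ofReal_sin]
  have hw : (z : ℂ) ^ 2 * (1 - triangularKernelHat ω z)
      = ((z ^ 2 + 2 / ω ^ 2 * (cos (ω * z) - 1) : ℝ) : ℂ)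
        + ((2 / ω ^ 2 * (sin (ω * z) - ω * z) : ℝ) : ℂ) * I := by
    have : (ω : ℂ) ≠ 0 := ofReal_ne_zero.mpr hω
    have : (z : ℂ) ≠ 0 := ofReal_ne_zero.mpr hz
    rw [triangularKernelHat, hexp]
    push_cast
    field_simp
    ring
  conv_lhs => rw [show z ^ 4 = ‖(z : ℂ) ^ 2‖ ^ 2 by simp [← pow_mul], ← mul_pow, ← norm_mul,
    hw, norm_add_mul_I, sq_sqrt (by positivity)]
  field_simp
  linear_combination 4 * Real.sin_sq_add_cos_sq (z * ω)

lemma two_mul_one_sub_exp_neg_le {s : ℝ} (hs : 0 ≤ s) :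
    2 * (1 - rexp (-s)) ≤ s ^ 2 / 3 + 2 * s * rexp (-s) + 2 / 3 * s ^ 2 * rexp (-s) := by
  let g (t : ℝ) : ℝ :=
    t ^ 2 / 3 + 2 * t * rexp (-t) + 2 / 3 * t ^ 2 * rexp (-t) - 2 * (1 - rexp (-t))
  have hg (t : ℝ) : HasDerivAt g (2 / 3 * t * (1 - (t + 1) * rexp (-t))) t := by
    have he := (hasDerivAt_neg t).exp
    have := ((((hasDerivAt_pow 2 t).div_const 3).add
      (((hasDerivAt_id' t).const_mul 2).mul he)).add
      (((hasDerivAt_pow 2 t).const_mul (2 / 3)).mul he)).sub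
      ((he.const_sub 1).const_mul 2)
    exact this.congr_deriv (by ring)
  have hg_nonneg {t : ℝ} (ht : 0 < t) : 0 ≤ 2 / 3 * t * (1 - (t + 1) * rexp (-t)) := by
    have h := mul_le_mul_of_nonneg_right (add_one_le_exp t) (exp_pos (-t)).le
    rw [← Real.exp_add, add_neg_cancel, Real.exp_zero] at h
    nlinarith
  have hmono : MonotoneOn g (Set.Ici 0) :=
    monotoneOn_of_deriv_nonneg (convex_Ici 0) (fun t _ => (hg t).continuousAt.continuousWithinAt)
      (fun t _ => (hg t).differentiableAt.differentiableWithinAt)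
      (fun t ht => by rw [(hg t).deriv]; exact hg_nonneg (by simpa using ht))
  simpa [g] using hmono Set.self_mem_Ici hs hs

lemma mode_closed_form_le {ω : ℝ} (hω : ω ≠ 0) :
    4 * √π / ω ^ 4 * (2 - 2 * rexp (-ω ^ 2 / 4) + 3 / 16 * ω ^ 4
        - 1 / 2 * ω ^ 2 * rexp (-ω ^ 2 / 4) - 1 / 4 * ω ^ 4 * rexp (-ω ^ 2 / 4))
      ≤ 5 / 6 * √π * (1 - rexp (-ω ^ 2 / 4)) := by
  have h := two_mul_one_sub_exp_neg_le (s := ω ^ 2 / 4) (by positivity)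
  rw [← neg_div] at h
  rw [div_mul_eq_mul_div, div_le_iff₀ (by positivity)]
  linear_combination 4 * √π * h

lemma integral_exp_neg_sq_mul_pow_four_mul_norm_one_sub_triangularKernelHat_sq {ω : ℝ}
    (hω : ω ≠ 0) :
    ∫ z : ℝ, rexp (-z ^ 2) * z ^ 4 * ‖1 - triangularKernelHat ω z‖ ^ 2
      = 4 * √π / ω ^ 4 * (2 - 2 * rexp (-ω ^ 2 / 4) + 3 / 16 * ω ^ 4
          - 1 / 2 * ω ^ 2 * rexp (-ω ^ 2 / 4) - 1 / 4 * ω ^ 4 * rexp (-ω ^ 2 / 4)) := by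
  rw [mul_div_right_comm, mul_assoc (4 / ω ^ 4), ← integral_exp_neg_sq_mul_cos_sin_poly,
    ← integral_const_mul]
  refine integral_congr_ae ?_
  filter_upwards [Measure.ae_ne volume 0] with z hz
  rw [mul_assoc, pow_four_mul_norm_one_sub_triangularKernelHat_sq hω hz]
  ring

theorem gaussian_kernel_mode_estimate (ε : ℝ) (hε : 0 < ε) (k : ℤ) (hk : k ≠ 0)
    (ω : ℝ) (hω : ω = 2 * π * k * ε) :
    (∫ z : ℝ, Real.exp (-z ^ 2) * z ^ 4 *
        ‖(1 : ℂ) - (-(2 / ((ω : ℂ) ^ 2 * (z : ℂ) ^ 2)) *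
          (Complex.exp (Complex.I * ω * z) - 1 - Complex.I * ω * z))‖ ^ 2)
      = 4 * Real.sqrt π / ω ^ 4 *
          (2 - 2 * Real.exp (-ω ^ 2 / 4) + 3 / 16 * ω ^ 4
            - 1 / 2 * ω ^ 2 * Real.exp (-ω ^ 2 / 4)
            - 1 / 4 * ω ^ 4 * Real.exp (-ω ^ 2 / 4)) ∧
    (∫ z : ℝ, Real.exp (-z ^ 2) * z ^ 4 *
        ‖(1 : ℂ) - (-(2 / ((ω : ℂ) ^ 2 * (z : ℂ) ^ 2)) *
          (Complex.exp (Complex.I * ω * z) - 1 - Complex.I * ω * z))‖ ^ 2)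
      ≤ 5 / 6 * Real.sqrt π * (1 - Real.exp (-ω ^ 2 / 4)) := by
  have hω₀ : ω ≠ 0 := by simp [hω, hk, hε.ne', pi_ne_zero]
  have h := integral_exp_neg_sq_mul_pow_four_mul_norm_one_sub_triangularKernelHat_sq hω₀
  exact ⟨h, h ▸ mode_closed_form_le hω₀⟩
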